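/- Let C₀(Q) ⊆ A be a central non-degenerate inclusion and (p_q)_{q∈Q} a family of C*-seminorms on A satisfying (a) ‖a‖ = sup_{q∈Q} p_q(a) for all a ∈ A, and (b) p_q(f a) = |f(q)|·p_q(a) for all a ∈ A, f ∈ C₀(Q), q ∈ Q. If a ∈ A and q₀ ∈ Q satisfy limsup_{q→q₀} p_q(a) ≤ p_{q₀}(a) (i.e. for every ε > 0 there is a neighborhood V of q₀ with p_q(a) ≤ p_{q₀}(a) + ε for all q ∈ V), then p_{q₀}(a) = p^unif_{q₀}(a). -/
import Mathlib


open scoped ComplexOrder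
open ZeroAtInfty

/-- The seminorm `p^E_q` from the GNS representation of the state `ev_q ∘ E`:
`p^E_q(a)² = sup { (ev_q∘E)(x* a* a x) / (ev_q∘E)(x* x) : (ev_q∘E)(x* x) > 0 }`
(with value `0` when the set is empty). -/
noncomputable def pE {Q : Type*} [TopologicalSpace Q]
    {A : Type*} [NonUnitalCStarAlgebra A]
    (E : A →L[ℂ] C₀(Q, ℂ)) (q : Q) (a : A) : ℝ :=
  Real.sqrt (sSup {r : ℝ | ∃ x : A, 0 < (E (star x * x) q).re ∧
    r = (E (star x * (star a * a) * x) q).re / (E (star x * x) q).re})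

/-- `p^unif_q(a) = inf {‖f a‖ : f ∈ C₀(Q), 0 ≤ f ≤ 1, f q = 1}`, the quotient seminorm of
`A / J^unif_q`. -/
noncomputable def punif {Q : Type*} [TopologicalSpace Q] [LocallyCompactSpace Q] [T2Space Q]
    {A : Type*} [NonUnitalCStarAlgebra A]
    (ι : C₀(Q, ℂ) →⋆ₙₐ[ℂ] A) (q : Q) (a : A) : ℝ :=
  sInf {r : ℝ | ∃ f : C₀(Q, ℂ), (∀ x : Q, 0 ≤ f x ∧ f x ≤ 1) ∧ f q = 1 ∧ r = ‖ι f * a‖}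

/-- A bump function in `C₀(Q, ℂ)` equal to `1` at `q₀`, with values in `[0,1]`, vanishing
outside a given open neighborhood `U` of `q₀`. -/
lemma exists_bump {Q : Type*} [TopologicalSpace Q] [LocallyCompactSpace Q] [T2Space Q]
    {q₀ : Q} {U : Set Q} (hU : IsOpen U) (hq : q₀ ∈ U) :
    ∃ g : C₀(Q, ℂ), (∀ x : Q, 0 ≤ g x ∧ g x ≤ 1) ∧ g q₀ = 1 ∧ ∀ x ∉ U, g x = 0 := by
  obtain ⟨f, hf1, hf0, hfc, hf01⟩ :=
    exists_continuous_one_zero_of_isCompact (isCompact_singleton (x := q₀))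
      hU.isClosed_compl (Set.disjoint_left.mpr (by simpa using hq))
  have hcont : Continuous fun x : Q => ((f x : ℂ)) :=
    Complex.continuous_ofReal.comp f.continuous
  have hcs : HasCompactSupport fun x : Q => ((f x : ℂ)) :=
    hfc.comp_left (g := (Complex.ofReal)) (by simp)
  refine ⟨⟨⟨fun x => (f x : ℂ), hcont⟩, hcs.is_zero_at_infty⟩, ?_, ?_, ?_⟩
  · intro x
    constructor
    · show (0 : ℂ) ≤ (f x : ℂ)
      exact_mod_cast (hf01 x).1
    · show (f x : ℂ) ≤ 1
      exact_mod_cast (hf01 x).2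
  · show (f q₀ : ℂ) = 1
    exact_mod_cast hf1 rfl
  · intro x hx
    show (f x : ℂ) = 0
    exact_mod_cast hf0 hx

/-- Let `(p_q)` be a family of C*-seminorms on `A` with
`‖a‖ = sup_q p_q(a)` and `p_q(f a) = |f q| p_q(a)`. If `limsup_{q → q₀} p_q(a) ≤ p_{q₀}(a)`,
then `p_{q₀}(a) = p^unif_{q₀}(a)`. -/
theorem stmt11 {Q : Type*} [TopologicalSpace Q] [LocallyCompactSpace Q] [T2Space Q]
    {A : Type*} [NonUnitalCStarAlgebra A]
    (ι : C₀(Q, ℂ) →⋆ₙₐ[ℂ] A) (hisom : Isometry ι)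
    (hcentral : ∀ (f : C₀(Q, ℂ)) (a : A), ι f * a = a * ι f)
    (hnondeg : closure
      (Submodule.span ℂ {x : A | ∃ (f : C₀(Q, ℂ)) (a : A), x = ι f * a} : Set A) = Set.univ)
    (p : Q → A → ℝ)
    -- `p q` is a C*-seminorm :
    (hp_add : ∀ (q : Q) (a b : A), p q (a + b) ≤ p q a + p q b)
    (hp_smul : ∀ (q : Q) (c : ℂ) (a : A), p q (c • a) = ‖c‖ * p q a)
    (hp_mul : ∀ (q : Q) (a b : A), p q (a * b) ≤ p q a * p q b)
    (hp_star : ∀ (q : Q) (a : A), p q (star a * a) = p q a ^ 2)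
    -- (a) `‖a‖ = sup_q p_q(a)` :
    (hp_sup : ∀ a : A, IsLUB (Set.range fun q : Q => p q a) ‖a‖)
    -- (b) `p_q(f a) = |f q| ⬝ p_q(a)` :
    (hp_hom : ∀ (q : Q) (f : C₀(Q, ℂ)) (a : A), p q (ι f * a) = ‖f q‖ * p q a)
    (a : A) (q₀ : Q)
    (hlimsup : ∀ ε : ℝ, 0 < ε → ∃ V ∈ nhds q₀, ∀ q ∈ V, p q a ≤ p q₀ a + ε) :
    p q₀ a = punif ι q₀ a := by
  -- basic facts about the seminorms
  have hp_zero : ∀ q : Q, p q (0 : A) = 0 := by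
    intro q
    have := hp_smul q 0 0
    simpa using this
  have hp_nonneg : ∀ (q : Q) (b : A), 0 ≤ p q b := by
    intro q b
    have hneg : p q (-b) = p q b := by
      have := hp_smul q (-1) b
      simpa using this
    have h0 : p q 0 ≤ p q b + p q (-b) := by
      simpa using hp_add q b (-b)
    rw [hp_zero, hneg] at h0
    linarith
  have hp_le_norm : ∀ (q : Q) (b : A), p q b ≤ ‖b‖ := fun q b =>
    (hp_sup b).1 ⟨q, rfl⟩
  -- the defining set of `punif` is nonempty and bounded below
  obtain ⟨g₀, hg₀01, hg₀q, _⟩ := exists_bump (U := (Set.univ : Set Q)) isOpen_univ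
    (Set.mem_univ q₀)
  have hne : {r : ℝ | ∃ f : C₀(Q, ℂ), (∀ x : Q, 0 ≤ f x ∧ f x ≤ 1) ∧ f q₀ = 1 ∧
      r = ‖ι f * a‖}.Nonempty := ⟨‖ι g₀ * a‖, g₀, hg₀01, hg₀q, rfl⟩
  have hbdd : BddBelow {r : ℝ | ∃ f : C₀(Q, ℂ), (∀ x : Q, 0 ≤ f x ∧ f x ≤ 1) ∧ f q₀ = 1 ∧
      r = ‖ι f * a‖} := ⟨0, by rintro r ⟨f, -, -, rfl⟩; exact norm_nonneg _⟩
  refine le_antisymm ?_ ?_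
  · -- `p q₀ a ≤ punif`
    apply le_csInf hne
    rintro r ⟨f, hf01, hfq, rfl⟩
    have : p q₀ (ι f * a) = p q₀ a := by
      rw [hp_hom, hfq]; simp
    calc p q₀ a = p q₀ (ι f * a) := this.symm
      _ ≤ ‖ι f * a‖ := hp_le_norm _ _
  · -- `punif ≤ p q₀ a`
    apply le_of_forall_pos_le_add
    intro ε hε
    obtain ⟨V, hV, hVp⟩ := hlimsup ε hε
    obtain ⟨g, hg01, hgq, hg0⟩ := exists_bump (U := interior V) isOpen_interior
      (mem_interior_iff_mem_nhds.mpr hV)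
    have key : ‖ι g * a‖ ≤ p q₀ a + ε := by
      apply (hp_sup (ι g * a)).2
      rintro r ⟨q, rfl⟩
      simp only [hp_hom]
      by_cases hq : q ∈ interior V
      · have h1 : ‖g q‖ ≤ 1 := by
          have h01 := hg01 q
          have : g q = ((g q).re : ℂ) := by
            have := h01.1
            rw [Complex.le_def] at this
            simp only [Complex.zero_im] at this
            exact (Complex.ext rfl this.2.symm)
          rw [this, Complex.norm_real, Real.norm_eq_abs, abs_le]
          constructor
          · have := h01.1
            rw [Complex.le_def] at this
            have h0 : (0 : ℝ) ≤ (g q).re := by simpa using this.1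
            linarith
          · have := h01.2
            rw [Complex.le_def] at this
            simpa using this.1
        calc ‖g q‖ * p q a ≤ 1 * p q a :=
              mul_le_mul_of_nonneg_right h1 (hp_nonneg q a)
          _ = p q a := one_mul _
          _ ≤ p q₀ a + ε := hVp q (interior_subset hq)
      · rw [hg0 q hq]
        simp only [norm_zero, zero_mul]
        linarith [hp_nonneg q₀ a]
    calc punif ι q₀ a ≤ ‖ι g * a‖ := csInf_le hbdd ⟨g, hg01, hgq, rfl⟩
      _ ≤ p q₀ a + ε := key
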